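/- Let λ ∈ (0,1), t > 0 and p ∈ ℝ, and suppose there exists a (t,p)-conformal Borel probability measure on (0,1]. Then p ≥ log(4 λ^t (1−λ)^t); moreover, if λ^t ≤ 1/2 then in fact p ≥ log ψ(t), where ψ(t) = (1−λ)^t/(1−λ^t). Consequently the infimum of those p for which a (t,p)-conformal probability measure exists equals log ψ(t) when λ^t ≤ 1/2 and equals log(4 λ^t (1−λ)^t) when λ^t ≥ 1/2, and this infimum is attained. -/

import Mathlib

open MeasureTheory Set Filter Topology

/-- The Markov partition interval `W n = (lam^n, lam^(n-1)]` for `n ≥ 1`. -/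
noncomputable def Wint (lam : ℝ) (n : ℕ) : Set ℝ := Set.Ioc (lam ^ n) (lam ^ (n - 1))

/-- The map `F_lam : (0,1] → (0,1]`, extended by the identity outside `(0,1]`.
On `W n` it is `x ↦ (x - lam^n)/(lam(1-lam))` for `n ≥ 2` and
`x ↦ (x - lam)/(1-lam)` on `W 1`; for `x ∈ (0,1]` the branch index is
the least `n` with `lam^n < x`. -/
noncomputable def Flam (lam : ℝ) (x : ℝ) : ℝ :=
  if 0 < x ∧ x ≤ 1 then
    if sInf {n : ℕ | lam ^ n < x} = 1 then (x - lam) / (1 - lam)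
    else (x - lam ^ sInf {n : ℕ | lam ^ n < x}) / (lam * (1 - lam))
  else x

/-- The slope of `F_lam` on the branch `W n`. -/
noncomputable def slopeW (lam : ℝ) (n : ℕ) : ℝ :=
  if n = 1 then 1 / (1 - lam) else 1 / (lam * (1 - lam))

/-- A Borel measure `m` on `(0,1]` is `(t,p)`-conformal for `F_lam` if for every
branch `W n` and every Borel `A ⊆ W n` one has `m(F_lam(A)) = e^p * s_n^t * m(A)`. -/
def IsConformal (lam t p : ℝ) (m : Measure ℝ) : Prop :=
  ∀ n : ℕ, 1 ≤ n → ∀ A : Set ℝ, MeasurableSet A → A ⊆ Wint lam n →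
    m (Flam lam '' A) = ENNReal.ofReal (Real.exp p * slopeW lam n ^ t) * m A

/-- A set is wandering for `F_lam` if its preimages under all iterates are
pairwise disjoint. -/
def IsWanderingSet (lam : ℝ) (A : Set ℝ) : Prop :=
  Pairwise fun i j : ℕ => Disjoint ((Flam lam)^[i] ⁻¹' A) ((Flam lam)^[j] ⁻¹' A)

/-!
Write `θ = lam ^ t`, `b = exp (-p) * (1 - lam) ^ t` and `S n = m (0, lam ^ n]`. Conformality on a
full branch, `F (W n) = (0, lam ^ (n - 2)]`, together with `(0, lam ^ (n - 1)] = (0, lam ^ n] ∪ W n`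
gives `S 1 = 1 - b` and `S (k + 2) = S (k + 1) - b θ S k`. A positive solution of this recurrence
forces `b θ ≤ 1 / 4` and, when `θ ≤ 1 / 2`, also `b ≤ 1 - θ`: otherwise the ratios
`S (k + 1) / S k` drop by a fixed amount at every step.

Conversely, every nonnegative solution tending to `0` comes from a conformal probability measure.
Its distribution function has to satisfy `G x = S n + w n * G (F x)` on `W n`; the solution is a
series along the orbit of `x`, convergent because all weights are at most `b < 1`, and the
Stieltjes measure of the right-continuous version of `G` is conformal. At the two extremal values
of `p` the solutions `θ ^ n` and `(1 + (1 - 1 / (2 θ)) n) / 2 ^ n` are explicit.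
-/

section Branches

variable {lam : ℝ}

noncomputable def branchIndex (lam x : ℝ) : ℕ := sInf {n : ℕ | lam ^ n < x}

lemma Wint_subset_Ioc (h0 : 0 < lam) (h1 : lam < 1) (n : ℕ) : Wint lam n ⊆ Ioc 0 1 :=
  fun _ hx => ⟨(pow_pos h0 n).trans hx.1, hx.2.trans (pow_le_one₀ h0.le h1.le)⟩

lemma branchIndex_eq_of_mem_Wint (h0 : 0 < lam) (h1 : lam < 1) {n : ℕ} {x : ℝ}
    (hx : x ∈ Wint lam n) : branchIndex lam x = n := by
  refine le_antisymm (Nat.sInf_le hx.1) (le_csInf ⟨n, hx.1⟩ fun k hk => ?_)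
  by_contra! hkn
  have : lam ^ (n - 1) ≤ lam ^ k := pow_le_pow_of_le_one h0.le h1.le (by omega)
  exact lt_irrefl _ (hk.trans_le (hx.2.trans this))

lemma mem_Wint_branchIndex (h1 : lam < 1) {x : ℝ} (hx : x ∈ Ioc 0 1) :
    1 ≤ branchIndex lam x ∧ x ∈ Wint lam (branchIndex lam x) := by
  have hlt : lam ^ branchIndex lam x < x := Nat.sInf_mem (exists_pow_lt_of_lt_one hx.1 h1)
  have hpos : 1 ≤ branchIndex lam x := by
    by_contra! h
    rw [Nat.lt_one_iff.1 h, pow_zero] at hlt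
    exact hx.2.not_gt hlt
  exact ⟨hpos, hlt, not_lt.1 (Nat.notMem_of_lt_sInf (Nat.sub_lt hpos one_pos))⟩

lemma slopeW_pos (h0 : 0 < lam) (h1 : lam < 1) (n : ℕ) : 0 < slopeW lam n := by
  have : 0 < 1 - lam := sub_pos.2 h1
  unfold slopeW
  split_ifs <;> positivity

lemma Flam_eq_of_mem_Wint (h0 : 0 < lam) (h1 : lam < 1) {n : ℕ} {x : ℝ}
    (hx : x ∈ Wint lam n) : Flam lam x = slopeW lam n * (x - lam ^ n) := by
  have hn : sInf {k : ℕ | lam ^ k < x} = n := branchIndex_eq_of_mem_Wint h0 h1 hx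
  rw [Flam, if_pos (show 0 < x ∧ x ≤ 1 from Wint_subset_Ioc h0 h1 n hx), hn, slopeW]
  split_ifs with h
  · subst h
    ring
  · ring

lemma slopeW_mul_sub_pow (h0 : 0 < lam) (h1 : lam < 1) {n : ℕ} (hn : 1 ≤ n) :
    slopeW lam n * (lam ^ (n - 1) - lam ^ n) = lam ^ (n - 2) := by
  have : 1 - lam ≠ 0 := (sub_pos.2 h1).ne'
  have : lam ≠ 0 := h0.ne'
  rcases n with _ | _ | k
  · omega
  · show slopeW lam 1 * (lam ^ 0 - lam ^ 1) = lam ^ 0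
    rw [slopeW, if_pos rfl]
    field_simp
  · rw [slopeW, if_neg (by omega), show k + 2 - 1 = k + 1 from rfl, show k + 2 - 2 = k from rfl]
    field_simp
    ring

lemma image_mul_sub_Ioc {s : ℝ} (hs : 0 < s) (e a b : ℝ) :
    (fun x => s * (x - e)) '' Ioc a b = Ioc (s * (a - e)) (s * (b - e)) := by
  rw [show (fun x => s * (x - e)) = fun x => s * x + -(s * e) from funext fun x => by ring,
    image_affine_Ioc hs]
  congr 1 <;> ring

lemma Flam_image_Ioc (h0 : 0 < lam) (h1 : lam < 1) {n : ℕ} {a b : ℝ} (ha : lam ^ n ≤ a)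
    (hb : b ≤ lam ^ (n - 1)) :
    Flam lam '' Ioc a b = Ioc (slopeW lam n * (a - lam ^ n)) (slopeW lam n * (b - lam ^ n)) := by
  rw [image_congr fun x hx => Flam_eq_of_mem_Wint h0 h1 ⟨ha.trans_lt hx.1, hx.2.trans hb⟩,
    image_mul_sub_Ioc (slopeW_pos h0 h1 n)]

lemma Flam_image_Wint (h0 : 0 < lam) (h1 : lam < 1) {n : ℕ} (hn : 1 ≤ n) :
    Flam lam '' Wint lam n = Ioc 0 (lam ^ (n - 2)) := by
  rw [Wint, Flam_image_Ioc h0 h1 le_rfl le_rfl, sub_self, mul_zero, slopeW_mul_sub_pow h0 h1 hn]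

lemma Flam_mem_Ioc_of_mem_Wint (h0 : 0 < lam) (h1 : lam < 1) {n : ℕ} (hn : 1 ≤ n) {x : ℝ}
    (hx : x ∈ Wint lam n) : Flam lam x ∈ Ioc 0 (lam ^ (n - 2)) :=
  Flam_image_Wint h0 h1 hn ▸ mem_image_of_mem _ hx

lemma Flam_mem_Ioc (h0 : 0 < lam) (h1 : lam < 1) {x : ℝ} (hx : x ∈ Ioc 0 1) :
    Flam lam x ∈ Ioc 0 1 := by
  obtain ⟨hn, hxW⟩ := mem_Wint_branchIndex h1 hx
  obtain ⟨hpos, hle⟩ := Flam_mem_Ioc_of_mem_Wint h0 h1 hn hxW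
  exact ⟨hpos, hle.trans (pow_le_one₀ h0.le h1.le)⟩

lemma Flam_image_eq_preimage (h0 : 0 < lam) (h1 : lam < 1) {n : ℕ} {A : Set ℝ}
    (hA : A ⊆ Wint lam n) : Flam lam '' A = (fun y => y / slopeW lam n + lam ^ n) ⁻¹' A := by
  have hs := (slopeW_pos h0 h1 n).ne'
  rw [image_congr fun x hx => Flam_eq_of_mem_Wint h0 h1 (hA hx)]
  refine congrFun (image_eq_preimage_of_inverse (fun x => ?_) (fun y => ?_)) A
  · field_simp
    ring
  · field_simp
    ring

end Branches

/-- For a conformal probability measure `m`, `S n = m (0, lam ^ n]` and `w n` is the ratio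
`m (W n) / m (F (W n))`. For `n = 1` the index `n - 2` truncates to `0`, matching
`F (W 1) = (0, 1]`. -/
structure IsTailSeq (w S : ℕ → ℝ) : Prop where
  zero : S 0 = 1
  add_mul_sub_two : ∀ n, 1 ≤ n → S n + w n * S (n - 2) = S (n - 1)
  weight_pos : ∀ n, 0 < w n
  nonneg : ∀ n, 0 ≤ S n

namespace IsTailSeq

variable {w S : ℕ → ℝ}

lemma one (hS : IsTailSeq w S) : S 1 = 1 - w 1 := by
  have := hS.add_mul_sub_two 1 le_rfl
  simp only [Nat.sub_self, Nat.reduceSub, hS.zero, mul_one] at this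
  linarith

lemma add_two (hS : IsTailSeq w S) (k : ℕ) : S (k + 2) = S (k + 1) - w (k + 2) * S k := by
  have := hS.add_mul_sub_two (k + 2) (by omega)
  rw [show k + 2 - 2 = k from rfl, show k + 2 - 1 = k + 1 from rfl] at this
  linarith

lemma antitone (hS : IsTailSeq w S) : Antitone S := by
  refine antitone_nat_of_succ_le fun n => ?_
  have := hS.add_mul_sub_two (n + 1) (by omega)
  rw [Nat.add_sub_cancel] at this
  linarith [mul_nonneg (hS.weight_pos (n + 1)).le (hS.nonneg (n + 1 - 2))]

lemma le_one (hS : IsTailSeq w S) (n : ℕ) : S n ≤ 1 :=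
  hS.zero ▸ hS.antitone (Nat.zero_le n)

end IsTailSeq

section Recurrence

variable {S : ℕ → ℝ} {c : ℝ}

lemma pos_of_nonneg_of_recurrence (hc : 0 < c) (hrec : ∀ n, S (n + 2) = S (n + 1) - c * S n)
    (h0 : 0 < S 0) (hS : ∀ n, 0 ≤ S n) (n : ℕ) : 0 < S n := by
  induction n with
  | zero => exact h0
  | succ n ih => linarith [hrec n, hS (n + 2), mul_pos hc ih]

/-- The ratios `ρ k = S (k + 1) / S k` satisfy `ρ (k + 1) = 1 - c / ρ k ≤ ρ k - δ`, so they
would eventually become negative. -/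
lemma not_forall_pos_of_ratio_gap {δ : ℝ} (hδ : 0 < δ)
    (hrec : ∀ n, S (n + 2) = S (n + 1) - c * S n) (h10 : S 1 ≤ S 0)
    (hgap : ∀ ρ, 0 < ρ → ρ ≤ S 1 / S 0 → ρ - ρ ^ 2 - c ≤ -δ) : ¬ ∀ n, 0 < S n := by
  intro hpos
  set ρ : ℕ → ℝ := fun n => S (n + 1) / S n
  have hρpos : ∀ n, 0 < ρ n := fun n => div_pos (hpos _) (hpos _)
  have hρ01 : ρ 0 ≤ 1 := (div_le_one (hpos 0)).2 h10
  have hstep : ∀ k, ρ (k + 1) = 1 - c / ρ k := fun k => by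
    have := (hpos k).ne'
    have := (hpos (k + 1)).ne'
    simp only [ρ, hrec k]
    field_simp
  have hdrift : ∀ k : ℕ, ρ k ≤ ρ 0 - k * δ := by
    intro k
    induction k with
    | zero => simp
    | succ k ih =>
      have hk0 : ρ k ≤ ρ 0 := ih.trans (sub_le_self _ (mul_nonneg k.cast_nonneg hδ.le))
      have hgapk := hgap (ρ k) (hρpos k) hk0
      have hk1 : ρ k ≤ 1 := hk0.trans hρ01
      have hnext : ρ (k + 1) ≤ ρ k - δ := by
        rw [hstep, sub_le_comm, le_div_iff₀ (hρpos k)]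
        nlinarith [mul_nonneg hδ.le (sub_nonneg.2 hk1)]
      push_cast
      linarith
  obtain ⟨k, hk⟩ := exists_nat_gt (ρ 0 / δ)
  rw [div_lt_iff₀ hδ] at hk
  linarith [hdrift k, hρpos k]

lemma le_quarter_of_forall_pos (hrec : ∀ n, S (n + 2) = S (n + 1) - c * S n)
    (h10 : S 1 ≤ S 0) (hpos : ∀ n, 0 < S n) : c ≤ 1 / 4 := by
  by_contra! hc
  exact not_forall_pos_of_ratio_gap (δ := c - 1 / 4) (by linarith) hrec h10
    (fun ρ _ _ => by nlinarith [sq_nonneg (ρ - 1 / 2)]) hpos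

lemma le_one_sub_of_forall_pos {b θ : ℝ} (hθ : θ ≤ 1 / 2)
    (hrec : ∀ n, S (n + 2) = S (n + 1) - b * θ * S n) (h0 : S 0 = 1) (h1 : S 1 = 1 - b)
    (hpos : ∀ n, 0 < S n) : b ≤ 1 - θ := by
  by_contra! hb
  -- on `(0, 1 - b]` one has `ρ - ρ ^ 2 - b θ + b (b + θ - 1) = (ρ - b) (1 - b - ρ) ≤ 0`
  refine not_forall_pos_of_ratio_gap (δ := b * (b + θ - 1)) (by nlinarith) hrec
    (by rw [h0, h1]; linarith) (fun ρ _ hρ => ?_) hpos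
  rw [h0, h1, div_one] at hρ
  nlinarith [mul_nonneg (sub_nonneg.2 hρ) (show (0 : ℝ) ≤ b - ρ by linarith)]

end Recurrence

noncomputable def conformalWeight (lam t p : ℝ) (n : ℕ) : ℝ :=
  (Real.exp p * slopeW lam n ^ t)⁻¹

section ConformalWeight

variable {lam t p : ℝ}

lemma conformalWeight_pos (h0 : 0 < lam) (h1 : lam < 1) (n : ℕ) :
    0 < conformalWeight lam t p n :=
  inv_pos.2 (mul_pos (Real.exp_pos p) (Real.rpow_pos_of_pos (slopeW_pos h0 h1 n) t))

lemma conformalWeight_one (h1 : lam < 1) :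
    conformalWeight lam t p 1 = Real.exp (-p) * (1 - lam) ^ t := by
  rw [conformalWeight, slopeW, if_pos rfl, one_div, Real.inv_rpow (sub_pos.2 h1).le, mul_inv,
    inv_inv, Real.exp_neg]

lemma conformalWeight_of_ne_one (h0 : 0 < lam) (h1 : lam < 1) {n : ℕ} (hn : n ≠ 1) :
    conformalWeight lam t p n = Real.exp (-p) * (1 - lam) ^ t * lam ^ t := by
  have := sub_pos.2 h1
  rw [conformalWeight, slopeW, if_neg hn, one_div, Real.inv_rpow (by positivity), mul_inv,
    inv_inv, Real.exp_neg, Real.mul_rpow h0.le this.le]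
  ring

lemma isTailSeq_conformalWeight_iff (h0 : 0 < lam) (h1 : lam < 1) {S : ℕ → ℝ} :
    IsTailSeq (conformalWeight lam t p) S ↔
      S 0 = 1 ∧ S 1 = 1 - Real.exp (-p) * (1 - lam) ^ t ∧
      (∀ k, S (k + 2) = S (k + 1) - Real.exp (-p) * (1 - lam) ^ t * lam ^ t * S k) ∧
      ∀ n, 0 ≤ S n := by
  refine ⟨fun hS => ⟨hS.zero, ?_, fun k => ?_, hS.nonneg⟩, fun ⟨hS0, hS1, hrec, hnn⟩ => ⟨hS0, ?_,
    conformalWeight_pos h0 h1, hnn⟩⟩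
  · rw [hS.one, conformalWeight_one h1]
  · rw [hS.add_two, conformalWeight_of_ne_one h0 h1 (by omega)]
  · rintro (_ | _ | k) hn
    · omega
    · show S 1 + conformalWeight lam t p 1 * S 0 = S 0
      rw [conformalWeight_one h1, hS1, hS0]
      ring
    · show S (k + 2) + conformalWeight lam t p (k + 2) * S k = S (k + 1)
      rw [conformalWeight_of_ne_one h0 h1 (by omega), hrec]
      ring

end ConformalWeight

namespace IsConformal

variable {lam t p : ℝ} {m : Measure ℝ}

lemma measure_Wint_toReal [IsFiniteMeasure m] (h0 : 0 < lam) (h1 : lam < 1)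
    (hc : IsConformal lam t p m) {n : ℕ} (hn : 1 ≤ n) :
    (m (Wint lam n)).toReal = conformalWeight lam t p n * (m (Ioc 0 (lam ^ (n - 2)))).toReal := by
  have hK : 0 < Real.exp p * slopeW lam n ^ t :=
    mul_pos (Real.exp_pos p) (Real.rpow_pos_of_pos (slopeW_pos h0 h1 n) t)
  have h := congrArg ENNReal.toReal (hc n hn (Wint lam n) measurableSet_Ioc subset_rfl)
  rw [Flam_image_Wint h0 h1 hn, ENNReal.toReal_mul, ENNReal.toReal_ofReal hK.le] at h
  rw [h, conformalWeight, inv_mul_cancel_left₀ hK.ne']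

lemma isTailSeq [IsFiniteMeasure m] (h0 : 0 < lam) (h1 : lam < 1) (hm1 : m (Ioc 0 1) = 1)
    (hc : IsConformal lam t p m) :
    IsTailSeq (conformalWeight lam t p) fun n => (m (Ioc 0 (lam ^ n))).toReal where
  zero := by simp [hm1]
  add_mul_sub_two n hn := by
    have hunion : Ioc 0 (lam ^ n) ∪ Wint lam n = Ioc 0 (lam ^ (n - 1)) :=
      Ioc_union_Ioc_eq_Ioc (by positivity) (pow_le_pow_of_le_one h0.le h1.le (Nat.sub_le n 1))
    have hdisj : Disjoint (Ioc 0 (lam ^ n)) (Wint lam n) := Ioc_disjoint_Ioc_of_le le_rfl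
    rw [← hunion, measure_union hdisj measurableSet_Ioc,
      ENNReal.toReal_add (measure_ne_top _ _) (measure_ne_top _ _),
      hc.measure_Wint_toReal h0 h1 hn]
  weight_pos := conformalWeight_pos h0 h1
  nonneg _ := ENNReal.toReal_nonneg

theorem log_le [IsFiniteMeasure m] (h0 : 0 < lam) (h1 : lam < 1) (ht : 0 < t)
    (hm1 : m (Ioc 0 1) = 1) (hc : IsConformal lam t p m) :
    Real.log (4 * lam ^ t * (1 - lam) ^ t) ≤ p ∧
      (lam ^ t ≤ 1 / 2 → Real.log ((1 - lam) ^ t / (1 - lam ^ t)) ≤ p) := by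
  obtain ⟨hS0, hS1, hrec, hnn⟩ :=
    (isTailSeq_conformalWeight_iff h0 h1).1 (hc.isTailSeq h0 h1 hm1)
  set b := Real.exp (-p) * (1 - lam) ^ t with hb
  have hθ : 0 < lam ^ t := Real.rpow_pos_of_pos h0 t
  have hL : 0 < (1 - lam) ^ t := Real.rpow_pos_of_pos (sub_pos.2 h1) t
  have hb0 : 0 < b := by positivity
  have hpos := pos_of_nonneg_of_recurrence (by positivity) hrec (by rw [hS0]; exact one_pos) hnn
  have hexp : (1 - lam) ^ t = b * Real.exp p := by
    rw [hb, mul_right_comm, ← Real.exp_add, neg_add_cancel, Real.exp_zero, one_mul]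
  constructor
  · have := le_quarter_of_forall_pos hrec (by rw [hS0, hS1]; linarith) hpos
    rw [Real.log_le_iff_le_exp (by positivity), hexp]
    nlinarith [Real.exp_pos p]
  · intro hθ2
    have := le_one_sub_of_forall_pos hθ2 hrec hS0 hS1 hpos
    have hθ1 : lam ^ t < 1 := Real.rpow_lt_one h0.le h1 ht
    rw [Real.log_le_iff_le_exp (div_pos hL (by linarith)), div_le_iff₀ (by linarith), hexp]
    nlinarith [Real.exp_pos p]

end IsConformal

section DistributionFunction

variable {lam r : ℝ} {w S : ℕ → ℝ}

/-- On `W n` the distribution function `G x = m (0, x]` of a conformal measure satisfies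
`G x = m (0, lam ^ n] + m (W n ∩ (0, x]) = S n + w n * G (F x)`, i.e. `G = transfer lam w S G`. -/
noncomputable def transfer (lam : ℝ) (w S : ℕ → ℝ) (Q : ℝ → ℝ) (x : ℝ) : ℝ :=
  S (branchIndex lam x) + w (branchIndex lam x) * Q (Flam lam x)

structure IsTailDominated (lam : ℝ) (S : ℕ → ℝ) (Q : ℝ → ℝ) : Prop where
  monotoneOn : MonotoneOn Q (Ioc 0 1)
  nonneg : ∀ x ∈ Ioc (0 : ℝ) 1, 0 ≤ Q x
  le_tail : ∀ k, ∀ x ∈ Ioc 0 (lam ^ k), Q x ≤ S k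

lemma transfer_le_of_le_tail (h0 : 0 < lam) (h1 : lam < 1) (hS : IsTailSeq w S) {Q : ℝ → ℝ}
    (hQ : ∀ k, ∀ x ∈ Ioc 0 (lam ^ k), Q x ≤ S k) {x : ℝ} (hx : x ∈ Ioc 0 1) :
    transfer lam w S Q x ≤ S (branchIndex lam x - 1) := by
  obtain ⟨hn, hxW⟩ := mem_Wint_branchIndex h1 hx
  calc transfer lam w S Q x
      ≤ S (branchIndex lam x) + w (branchIndex lam x) * S (branchIndex lam x - 2) :=
        add_le_add le_rfl (mul_le_mul_of_nonneg_left
          (hQ _ _ (Flam_mem_Ioc_of_mem_Wint h0 h1 hn hxW)) (hS.weight_pos _).le)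
    _ = S (branchIndex lam x - 1) := hS.add_mul_sub_two _ hn

namespace IsTailDominated

variable {Q : ℝ → ℝ}

lemma const_zero (hS : IsTailSeq w S) : IsTailDominated lam S fun _ => 0 :=
  ⟨fun _ _ _ _ _ => le_rfl, fun _ _ => le_rfl, fun k _ _ => hS.nonneg k⟩

lemma transfer_monotoneOn (h0 : 0 < lam) (h1 : lam < 1) (hS : IsTailSeq w S)
    (hQ : IsTailDominated lam S Q) : MonotoneOn (transfer lam w S Q) (Ioc 0 1) := by
  intro x hx y hy hxy
  obtain ⟨-, hxW⟩ := mem_Wint_branchIndex h1 hx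
  obtain ⟨-, hyW⟩ := mem_Wint_branchIndex h1 hy
  have hle : branchIndex lam y ≤ branchIndex lam x := Nat.sInf_le (hxW.1.trans_le hxy)
  rcases hle.eq_or_lt with heq | hlt
  · have hF : Flam lam x ≤ Flam lam y := by
      rw [Flam_eq_of_mem_Wint h0 h1 hxW, Flam_eq_of_mem_Wint h0 h1 hyW, heq]
      exact mul_le_mul_of_nonneg_left (by linarith) (slopeW_pos h0 h1 _).le
    simp only [transfer, heq]
    exact add_le_add le_rfl (mul_le_mul_of_nonneg_left
      (hQ.monotoneOn (Flam_mem_Ioc h0 h1 hx) (Flam_mem_Ioc h0 h1 hy) hF) (hS.weight_pos _).le)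
  · calc transfer lam w S Q x ≤ S (branchIndex lam x - 1) :=
          transfer_le_of_le_tail h0 h1 hS hQ.le_tail hx
      _ ≤ S (branchIndex lam y) := hS.antitone (by omega)
      _ ≤ transfer lam w S Q y := le_add_of_nonneg_right
          (mul_nonneg (hS.weight_pos _).le (hQ.nonneg _ (Flam_mem_Ioc h0 h1 hy)))

lemma transfer (h0 : 0 < lam) (h1 : lam < 1) (hS : IsTailSeq w S)
    (hQ : IsTailDominated lam S Q) : IsTailDominated lam S (transfer lam w S Q) where
  monotoneOn := hQ.transfer_monotoneOn h0 h1 hS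
  nonneg x hx :=
    add_nonneg (hS.nonneg _) (mul_nonneg (hS.weight_pos _).le (hQ.nonneg _ (Flam_mem_Ioc h0 h1 hx)))
  le_tail k x hx := by
    have hx1 : x ∈ Ioc 0 1 := ⟨hx.1, hx.2.trans (pow_le_one₀ h0.le h1.le)⟩
    obtain ⟨-, hxW⟩ := mem_Wint_branchIndex h1 hx1
    have hk : k < branchIndex lam x := by
      by_contra! h
      exact (hxW.1.trans_le hx.2).not_ge (pow_le_pow_of_le_one h0.le h1.le h)
    exact (transfer_le_of_le_tail h0 h1 hS hQ.le_tail hx1).trans (hS.antitone (by omega))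

lemma of_tendsto {Q : ℕ → ℝ → ℝ} {G : ℝ → ℝ} (hQ : ∀ K, IsTailDominated lam S (Q K))
    (hG : ∀ x, Tendsto (fun K => Q K x) atTop (𝓝 (G x))) : IsTailDominated lam S G where
  monotoneOn x hx y hy hxy :=
    le_of_tendsto_of_tendsto' (hG x) (hG y) fun K => (hQ K).monotoneOn hx hy hxy
  nonneg x hx := ge_of_tendsto' (hG x) fun K => (hQ K).nonneg x hx
  le_tail k x hx := le_of_tendsto' (hG x) fun K => (hQ K).le_tail k x hx

end IsTailDominated

noncomputable def orbitTerm (lam : ℝ) (w S : ℕ → ℝ) (x : ℝ) (k : ℕ) : ℝ :=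
  (∏ j ∈ Finset.range k, w (branchIndex lam ((Flam lam)^[j] x))) *
    S (branchIndex lam ((Flam lam)^[k] x))

noncomputable def cdfSeries (lam : ℝ) (w S : ℕ → ℝ) (x : ℝ) : ℝ :=
  ∑' k, orbitTerm lam w S x k

lemma orbitTerm_zero (x : ℝ) : orbitTerm lam w S x 0 = S (branchIndex lam x) := by
  simp [orbitTerm]

lemma orbitTerm_succ (x : ℝ) (k : ℕ) :
    orbitTerm lam w S x (k + 1) = w (branchIndex lam x) * orbitTerm lam w S (Flam lam x) k := by
  simp only [orbitTerm, Finset.prod_range_succ', Function.iterate_succ_apply,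
    Function.iterate_zero_apply]
  ring

lemma sum_range_succ_orbitTerm (K : ℕ) (x : ℝ) :
    ∑ k ∈ Finset.range (K + 1), orbitTerm lam w S x k =
      transfer lam w S (fun y => ∑ k ∈ Finset.range K, orbitTerm lam w S y k) x := by
  rw [Finset.sum_range_succ', transfer, Finset.mul_sum, add_comm]
  simp only [orbitTerm_succ, orbitTerm_zero]

lemma summable_orbitTerm (hS : IsTailSeq w S) (hw : ∀ n, w n ≤ r) (hr : r < 1) (x : ℝ) :
    Summable (orbitTerm lam w S x) := by
  have hprod : ∀ k, 0 ≤ ∏ j ∈ Finset.range k, w (branchIndex lam ((Flam lam)^[j] x)) :=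
    fun k => Finset.prod_nonneg fun _ _ => (hS.weight_pos _).le
  refine Summable.of_nonneg_of_le (fun k => mul_nonneg (hprod k) (hS.nonneg _)) (fun k => ?_)
    (summable_geometric_of_lt_one ((hS.weight_pos 0).le.trans (hw 0)) hr)
  calc orbitTerm lam w S x k
      ≤ ∏ j ∈ Finset.range k, w (branchIndex lam ((Flam lam)^[j] x)) :=
        mul_le_of_le_one_right (hprod k) (hS.le_one _)
    _ ≤ ∏ _j ∈ Finset.range k, r :=
        Finset.prod_le_prod (fun _ _ => (hS.weight_pos _).le) fun _ _ => hw _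
    _ = r ^ k := by rw [Finset.prod_const, Finset.card_range]

lemma cdfSeries_eq_transfer (hS : IsTailSeq w S) (hw : ∀ n, w n ≤ r) (hr : r < 1) (x : ℝ) :
    cdfSeries lam w S x = transfer lam w S (cdfSeries lam w S) x := by
  rw [cdfSeries, (summable_orbitTerm hS hw hr x).tsum_eq_zero_add, transfer, cdfSeries,
    ← tsum_mul_left]
  simp only [orbitTerm_zero, orbitTerm_succ]

lemma isTailDominated_cdfSeries (h0 : 0 < lam) (h1 : lam < 1) (hS : IsTailSeq w S)
    (hw : ∀ n, w n ≤ r) (hr : r < 1) : IsTailDominated lam S (cdfSeries lam w S) := by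
  refine IsTailDominated.of_tendsto (Q := fun K y => ∑ k ∈ Finset.range K, orbitTerm lam w S y k)
    (fun K => ?_) fun x => (summable_orbitTerm hS hw hr x).hasSum.tendsto_sum_nat
  induction K with
  | zero => simpa only [Finset.range_zero, Finset.sum_empty] using IsTailDominated.const_zero hS
  | succ K ih =>
    simp only [sum_range_succ_orbitTerm]
    exact ih.transfer h0 h1 hS

end DistributionFunction

lemma Monotone.stieltjesFunction_eq_of_tendsto {f : ℝ → ℝ} (hf : Monotone f) {x l : ℝ}
    (h : Tendsto f (𝓝[>] x) (𝓝 l)) : hf.stieltjesFunction x = l := by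
  rw [hf.stieltjesFunction_eq]
  exact rightLim_eq_of_tendsto h

lemma Monotone.tendsto_stieltjesFunction {f : ℝ → ℝ} (hf : Monotone f) (x : ℝ) :
    Tendsto f (𝓝[>] x) (𝓝 (hf.stieltjesFunction x)) := by
  rw [hf.stieltjesFunction_eq]
  exact hf.tendsto_rightLim x

section StieltjesMeasure

variable {lam : ℝ} {w S : ℕ → ℝ} {Q : ℝ → ℝ}

noncomputable def extendIoc01 (Q : ℝ → ℝ) (x : ℝ) : ℝ :=
  if x ≤ 0 then 0 else if x ≤ 1 then Q x else 1

lemma extendIoc01_of_nonpos {x : ℝ} (hx : x ≤ 0) : extendIoc01 Q x = 0 := if_pos hx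

lemma extendIoc01_of_mem {x : ℝ} (hx : x ∈ Ioc 0 1) : extendIoc01 Q x = Q x := by
  rw [extendIoc01, if_neg (not_le.2 hx.1), if_pos hx.2]

lemma extendIoc01_of_one_lt {x : ℝ} (hx : 1 < x) : extendIoc01 Q x = 1 := by
  rw [extendIoc01, if_neg (by linarith), if_neg (by linarith)]

namespace IsTailDominated

lemma extendIoc01_nonneg (hQ : IsTailDominated lam S Q) (x : ℝ) : 0 ≤ extendIoc01 Q x := by
  unfold extendIoc01
  split_ifs with h0 h1
  exacts [le_rfl, hQ.nonneg x ⟨not_le.1 h0, h1⟩, zero_le_one]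

lemma extendIoc01_le_tail (h0 : 0 < lam) (h1 : lam < 1) (hS : IsTailSeq w S)
    (hQ : IsTailDominated lam S Q) (k : ℕ) {x : ℝ} (hx : x ≤ lam ^ k) :
    extendIoc01 Q x ≤ S k := by
  rcases le_or_gt x 0 with hx0 | hx0
  · rw [extendIoc01_of_nonpos hx0]
    exact hS.nonneg k
  · rw [extendIoc01_of_mem ⟨hx0, hx.trans (pow_le_one₀ h0.le h1.le)⟩]
    exact hQ.le_tail k x ⟨hx0, hx⟩

lemma monotone_extendIoc01 (hS : IsTailSeq w S) (hQ : IsTailDominated lam S Q) :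
    Monotone (extendIoc01 Q) := by
  intro x y hxy
  rcases le_or_gt x 0 with hx0 | hx0
  · rw [extendIoc01_of_nonpos hx0]
    exact hQ.extendIoc01_nonneg y
  rcases le_or_gt y 1 with hy1 | hy1
  · rw [extendIoc01_of_mem ⟨hx0, hxy.trans hy1⟩, extendIoc01_of_mem ⟨hx0.trans_le hxy, hy1⟩]
    exact hQ.monotoneOn ⟨hx0, hxy.trans hy1⟩ ⟨hx0.trans_le hxy, hy1⟩ hxy
  rw [extendIoc01_of_one_lt hy1]
  rcases le_or_gt x 1 with hx1 | hx1
  · rw [extendIoc01_of_mem ⟨hx0, hx1⟩, ← hS.zero]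
    exact hQ.le_tail 0 x ⟨hx0, by rwa [pow_zero]⟩
  · rw [extendIoc01_of_one_lt hx1]

end IsTailDominated

lemma stieltjesFunction_extendIoc01_of_nonpos (h0 : 0 < lam) (h1 : lam < 1)
    (hS : IsTailSeq w S) (hQ : IsTailDominated lam S Q) (hlim : Tendsto S atTop (𝓝 0))
    (hG : Monotone (extendIoc01 Q)) {x : ℝ} (hx : x ≤ 0) : hG.stieltjesFunction x = 0 := by
  refine hG.stieltjesFunction_eq_of_tendsto (tendsto_order.2 ⟨fun a ha =>
    Eventually.of_forall fun y => ha.trans_le (hQ.extendIoc01_nonneg y), fun a ha => ?_⟩)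
  obtain ⟨k, hk⟩ := (hlim.eventually (gt_mem_nhds ha)).exists
  filter_upwards [Ioo_mem_nhdsGT (hx.trans_lt (pow_pos h0 k))] with y hy
  exact (hQ.extendIoc01_le_tail h0 h1 hS k hy.2.le).trans_lt hk

lemma stieltjesFunction_extendIoc01_of_one_le (hG : Monotone (extendIoc01 Q)) {x : ℝ}
    (hx : 1 ≤ x) : hG.stieltjesFunction x = 1 :=
  hG.stieltjesFunction_eq_of_tendsto (tendsto_const_nhds.congr' (eventually_nhdsWithin_of_forall
    fun _ hy => (extendIoc01_of_one_lt (hx.trans_lt hy)).symm))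

lemma stieltjesFunction_extendIoc01_eq (h0 : 0 < lam) (h1 : lam < 1)
    (hfix : ∀ x ∈ Ioc 0 1, Q x = transfer lam w S Q x) (hG : Monotone (extendIoc01 Q)) {n : ℕ}
    {x : ℝ} (hx1 : lam ^ n ≤ x) (hx2 : x < lam ^ (n - 1)) :
    hG.stieltjesFunction x =
      S n + w n * hG.stieltjesFunction (slopeW lam n * (x - lam ^ n)) := by
  have hT : Tendsto (fun y => slopeW lam n * (y - lam ^ n)) (𝓝[>] x)
      (𝓝[>] (slopeW lam n * (x - lam ^ n))) :=
    tendsto_nhdsWithin_iff.2 ⟨((continuous_const.mul (continuous_id.sub continuous_const)).tendsto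
      x).mono_left nhdsWithin_le_nhds, eventually_nhdsWithin_of_forall fun y hy =>
        mul_lt_mul_of_pos_left (sub_lt_sub_right hy _) (slopeW_pos h0 h1 n)⟩
  refine hG.stieltjesFunction_eq_of_tendsto ((((hG.tendsto_stieltjesFunction _).comp hT).const_mul
    (w n)).const_add (S n) |>.congr' ?_)
  filter_upwards [Ioo_mem_nhdsGT hx2] with y hy
  have hyW : y ∈ Wint lam n := ⟨hx1.trans_lt hy.1, hy.2.le⟩
  have hy01 := Wint_subset_Ioc h0 h1 n hyW
  rw [extendIoc01_of_mem hy01, hfix y hy01, transfer, branchIndex_eq_of_mem_Wint h0 h1 hyW,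
    Function.comp_apply, ← Flam_eq_of_mem_Wint h0 h1 hyW,
    extendIoc01_of_mem (Flam_mem_Ioc h0 h1 hy01)]

lemma stieltjesFunction_extendIoc01_pow (h0 : 0 < lam) (h1 : lam < 1) (hS : IsTailSeq w S)
    (hQ : IsTailDominated lam S Q) (hfix : ∀ x ∈ Ioc 0 1, Q x = transfer lam w S Q x)
    (hlim : Tendsto S atTop (𝓝 0)) (hG : Monotone (extendIoc01 Q)) (k : ℕ) :
    hG.stieltjesFunction (lam ^ k) = S k := by
  rcases k.eq_zero_or_pos with rfl | hk
  · rw [pow_zero, stieltjesFunction_extendIoc01_of_one_le hG le_rfl, hS.zero]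
  · rw [stieltjesFunction_extendIoc01_eq h0 h1 hfix hG le_rfl
      (pow_lt_pow_right_of_lt_one₀ h0 h1 (Nat.sub_lt hk one_pos)), sub_self, mul_zero,
      stieltjesFunction_extendIoc01_of_nonpos h0 h1 hS hQ hlim hG le_rfl, mul_zero, add_zero]

lemma stieltjesFunction_extendIoc01_eq_of_mem_Icc (h0 : 0 < lam) (h1 : lam < 1)
    (hS : IsTailSeq w S) (hQ : IsTailDominated lam S Q)
    (hfix : ∀ x ∈ Ioc 0 1, Q x = transfer lam w S Q x) (hlim : Tendsto S atTop (𝓝 0))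
    (hG : Monotone (extendIoc01 Q)) {n : ℕ} (hn : 1 ≤ n) {x : ℝ}
    (hx : x ∈ Icc (lam ^ n) (lam ^ (n - 1))) :
    hG.stieltjesFunction x =
      S n + w n * hG.stieltjesFunction (slopeW lam n * (x - lam ^ n)) := by
  rcases hx.2.lt_or_eq with hlt | rfl
  · exact stieltjesFunction_extendIoc01_eq h0 h1 hfix hG hx.1 hlt
  · rw [slopeW_mul_sub_pow h0 h1 hn, stieltjesFunction_extendIoc01_pow h0 h1 hS hQ hfix hlim,
      stieltjesFunction_extendIoc01_pow h0 h1 hS hQ hfix hlim]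
    exact (hS.add_mul_sub_two n hn).symm

end StieltjesMeasure

namespace StieltjesFunction

variable {lam t p : ℝ} {S : ℕ → ℝ}

lemma measure_Flam_image_Ioc (h0 : 0 < lam) (h1 : lam < 1) (F : StieltjesFunction ℝ)
    (hF : ∀ n, 1 ≤ n → ∀ x ∈ Icc (lam ^ n) (lam ^ (n - 1)),
      F x = S n + conformalWeight lam t p n * F (slopeW lam n * (x - lam ^ n)))
    {n : ℕ} (hn : 1 ≤ n) {a b : ℝ} (ha : lam ^ n ≤ a) (hab : a ≤ b) (hb : b ≤ lam ^ (n - 1)) :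
    F.measure (Flam lam '' Ioc a b) =
      ENNReal.ofReal (Real.exp p * slopeW lam n ^ t) * F.measure (Ioc a b) := by
  have hK : 0 < Real.exp p * slopeW lam n ^ t :=
    mul_pos (Real.exp_pos p) (Real.rpow_pos_of_pos (slopeW_pos h0 h1 n) t)
  rw [Flam_image_Ioc h0 h1 ha hb, F.measure_Ioc, F.measure_Ioc, ← ENNReal.ofReal_mul hK.le,
    hF n hn a ⟨ha, hab.trans hb⟩, hF n hn b ⟨ha.trans hab, hb⟩, conformalWeight]
  congr 1
  linear_combination (F (slopeW lam n * (a - lam ^ n)) - F (slopeW lam n * (b - lam ^ n))) *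
    mul_inv_cancel₀ hK.ne'

lemma isConformal_measure (h0 : 0 < lam) (h1 : lam < 1) (F : StieltjesFunction ℝ)
    [IsFiniteMeasure F.measure]
    (hF : ∀ n, 1 ≤ n → ∀ x ∈ Icc (lam ^ n) (lam ^ (n - 1)),
      F x = S n + conformalWeight lam t p n * F (slopeW lam n * (x - lam ^ n))) :
    IsConformal lam t p F.measure := by
  intro n hn A hA hAW
  set g : ℝ → ℝ := fun y => y / slopeW lam n + lam ^ n
  have hg : Measurable g := (measurable_id.div_const _).add_const _
  set c := ENNReal.ofReal (Real.exp p * slopeW lam n ^ t)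
  have hrestr : (F.measure.map g).restrict (Wint lam n) = (c • F.measure).restrict (Wint lam n) := by
    refine Measure.ext_of_Ioc _ _ fun a b _ => ?_
    rw [Measure.restrict_apply measurableSet_Ioc, Measure.restrict_apply measurableSet_Ioc, Wint,
      Ioc_inter_Ioc]
    rcases le_or_gt (b ⊓ lam ^ (n - 1)) (a ⊔ lam ^ n) with hle | hlt
    · simp only [Ioc_eq_empty (not_lt.2 hle), measure_empty]
    · have hsub : Ioc (a ⊔ lam ^ n) (b ⊓ lam ^ (n - 1)) ⊆ Wint lam n :=
        Ioc_subset_Ioc le_sup_right inf_le_right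
      rw [Measure.map_apply hg measurableSet_Ioc, ← Flam_image_eq_preimage h0 h1 hsub,
        measure_Flam_image_Ioc h0 h1 F hF hn le_sup_right hlt.le inf_le_right,
        Measure.smul_apply, smul_eq_mul]
  have h := congrArg (fun μ : Measure ℝ => μ A) hrestr
  simp only [Measure.restrict_apply hA, inter_eq_self_of_subset_left hAW] at h
  rw [Flam_image_eq_preimage h0 h1 hAW, ← Measure.map_apply hg hA, h, Measure.smul_apply,
    smul_eq_mul]

end StieltjesFunction

section Existence

variable {lam t p : ℝ}

theorem exists_isConformal_of_isTailSeq {S : ℕ → ℝ} (h0 : 0 < lam) (h1 : lam < 1) (ht : 0 ≤ t)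
    (hS : IsTailSeq (conformalWeight lam t p) S) (hb : conformalWeight lam t p 1 < 1)
    (hlim : Tendsto S atTop (𝓝 0)) :
    ∃ m : Measure ℝ, IsProbabilityMeasure m ∧ m (Ioc 0 1) = 1 ∧ IsConformal lam t p m := by
  have hw : ∀ n, conformalWeight lam t p n ≤ conformalWeight lam t p 1 := by
    intro n
    rcases eq_or_ne n 1 with rfl | hn
    · exact le_rfl
    rw [conformalWeight_of_ne_one h0 h1 hn, conformalWeight_one h1]
    exact mul_le_of_le_one_right (by positivity) (Real.rpow_le_one h0.le h1.le ht)
  have hQ := isTailDominated_cdfSeries h0 h1 hS hw hb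
  have hG := hQ.monotone_extendIoc01 hS
  have hF0 : ∀ x ≤ 0, hG.stieltjesFunction x = 0 := fun _ hx =>
    stieltjesFunction_extendIoc01_of_nonpos h0 h1 hS hQ hlim hG hx
  have hF1 : ∀ x, 1 ≤ x → hG.stieltjesFunction x = 1 := fun _ hx =>
    stieltjesFunction_extendIoc01_of_one_le hG hx
  have hprob : IsProbabilityMeasure hG.stieltjesFunction.measure := by
    constructor
    rw [hG.stieltjesFunction.measure_univ (l := 0) (u := 1)
      (tendsto_const_nhds.congr' (eventually_atBot.2 ⟨0, fun x hx => (hF0 x hx).symm⟩))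
      (tendsto_const_nhds.congr' (eventually_atTop.2 ⟨1, fun x hx => (hF1 x hx).symm⟩)),
      sub_zero, ENNReal.ofReal_one]
  refine ⟨_, hprob, ?_, StieltjesFunction.isConformal_measure h0 h1 _ fun n hn x hx =>
    stieltjesFunction_extendIoc01_eq_of_mem_Icc h0 h1 hS hQ
      (fun x _ => cdfSeries_eq_transfer hS hw hb x) hlim hG hn hx⟩
  rw [StieltjesFunction.measure_Ioc, hF1 1 le_rfl, hF0 0 le_rfl, sub_zero, ENNReal.ofReal_one]

theorem exists_isConformal_log_div (h0 : 0 < lam) (h1 : lam < 1) (ht : 0 < t) :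
    ∃ m : Measure ℝ, IsProbabilityMeasure m ∧ m (Ioc 0 1) = 1 ∧
      IsConformal lam t (Real.log ((1 - lam) ^ t / (1 - lam ^ t))) m := by
  have hθ0 : 0 < lam ^ t := Real.rpow_pos_of_pos h0 t
  have hθ1 : lam ^ t < 1 := Real.rpow_lt_one h0.le h1 ht
  have hL : 0 < (1 - lam) ^ t := Real.rpow_pos_of_pos (sub_pos.2 h1) t
  have hb : Real.exp (-Real.log ((1 - lam) ^ t / (1 - lam ^ t))) * (1 - lam) ^ t = 1 - lam ^ t := by
    rw [Real.exp_neg, Real.exp_log (div_pos hL (by linarith))]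
    field_simp
  refine exists_isConformal_of_isTailSeq (S := fun n => (lam ^ t) ^ n) h0 h1 ht.le
    ((isTailSeq_conformalWeight_iff h0 h1).2 ⟨pow_zero _, ?_, fun k => ?_, fun n => by positivity⟩)
    (by rw [conformalWeight_one h1, hb]; linarith)
    (tendsto_pow_atTop_nhds_zero_of_lt_one hθ0.le hθ1)
  · rw [hb]
    ring
  · rw [hb]
    ring

/-- At this `p` the recurrence reads `S (k + 2) = S (k + 1) - S k / 4`, whose characteristic root
`1 / 2` is double. -/
theorem exists_isConformal_log_four_mul (h0 : 0 < lam) (h1 : lam < 1) (ht : 0 < t)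
    (hθ : 1 / 2 < lam ^ t) :
    ∃ m : Measure ℝ, IsProbabilityMeasure m ∧ m (Ioc 0 1) = 1 ∧
      IsConformal lam t (Real.log (4 * lam ^ t * (1 - lam) ^ t)) m := by
  have hL : 0 < (1 - lam) ^ t := Real.rpow_pos_of_pos (sub_pos.2 h1) t
  have hb : Real.exp (-Real.log (4 * lam ^ t * (1 - lam) ^ t)) * (1 - lam) ^ t =
      1 / (4 * lam ^ t) := by
    rw [Real.exp_neg, Real.exp_log (by positivity)]
    field_simp
  set B := 1 - 1 / (2 * lam ^ t) with hBdef
  have hB : 0 ≤ B := by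
    rw [sub_nonneg, div_le_one (by linarith)]
    linarith
  have hlim : Tendsto (fun n : ℕ => (1 + B * n) / 2 ^ n) atTop (𝓝 0) := by
    have h := (tendsto_pow_atTop_nhds_zero_of_lt_one (r := (2⁻¹ : ℝ)) (by norm_num)
      (by norm_num)).add ((tendsto_self_mul_const_pow_of_lt_one (r := (2⁻¹ : ℝ)) (by norm_num)
        (by norm_num)).const_mul B)
    rw [mul_zero, add_zero] at h
    exact h.congr fun n => by rw [inv_pow]; ring
  refine exists_isConformal_of_isTailSeq (S := fun n => (1 + B * n) / 2 ^ n) h0 h1 ht.le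
    ((isTailSeq_conformalWeight_iff h0 h1).2 ⟨by simp, ?_, fun k => ?_, fun n => by positivity⟩)
    (by rw [conformalWeight_one h1, hb, div_lt_one (by linarith)]; linarith)
    hlim
  · rw [hb, hBdef]
    field_simp
    ring
  · rw [hb, hBdef]
    push_cast
    field_simp
    ring

end Existence

/-- Any `p` admitting a `(t,p)`-conformal probability measure satisfies
`p ≥ log (4 lam^t (1-lam)^t)`, and moreover `p ≥ log ψ(t)` when `lam^t ≤ 1/2`.
The infimum of such `p` is `log ψ(t)` if `lam^t ≤ 1/2` and `log (4 lam^t (1-lam)^t)`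
if `lam^t ≥ 1/2`, and it is attained. -/
theorem stmt6 (lam t : ℝ) (h1 : 0 < lam) (h2 : lam < 1) (ht : 0 < t) :
    (∀ p : ℝ, ∀ m : Measure ℝ, IsProbabilityMeasure m → m (Set.Ioc 0 1) = 1 →
      IsConformal lam t p m →
      Real.log (4 * lam^t * (1-lam)^t) ≤ p ∧
      (lam^t ≤ 1/2 → Real.log ((1-lam)^t / (1 - lam^t)) ≤ p)) ∧
    IsLeast {p : ℝ | ∃ m : Measure ℝ, IsProbabilityMeasure m ∧ m (Set.Ioc 0 1) = 1 ∧
        IsConformal lam t p m}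
      (if lam^t ≤ 1/2 then Real.log ((1-lam)^t / (1 - lam^t))
       else Real.log (4 * lam^t * (1-lam)^t)) := by
  have lower := fun p m (_ : IsProbabilityMeasure m) hm1 hc =>
    IsConformal.log_le (p := p) (m := m) h1 h2 ht hm1 hc
  refine ⟨lower, ?_, fun q ⟨m, hm, hm1, hc⟩ => ?_⟩
  · split_ifs with hθ
    · exact exists_isConformal_log_div h1 h2 ht
    · exact exists_isConformal_log_four_mul h1 h2 ht (by linarith)
  · split_ifs with hθ
    · exact (lower q m hm hm1 hc).2 hθ
    · exact (lower q m hm hm1 hc).1
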